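/- The q-bracket of the 'integer' function n_* equals ∑_{λ∈P} φ(λ) q^{|λ|}; equivalently, for every integer n ≥ 0, ∑_{λ⊢n} n_λ = ∑_{k=0}^{n} (∑_{δ⊢k} φ(δ)) · p(n−k). -/

import Mathlib

/-- The set of partition divisors (sub-partitions) of `l`. -/
def pdivisors (l : Multiset ℕ+) : Finset (Multiset ℕ+) := l.powerset.toFinset

/-- Partition-theoretic Möbius function. -/
def pmu (l : Multiset ℕ+) : ℂ := if l.Nodup then (-1 : ℂ) ^ (Multiset.card l) else 0

/-- The "integer" of a partition: the product of its parts. -/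
def nInt (l : Multiset ℕ+) : ℕ := (l.map (fun a => (a : ℕ))).prod

/-- Partition-theoretic phi function. -/
noncomputable def pphi (l : Multiset ℕ+) : ℂ :=
  (nInt l : ℂ) * ∏ a ∈ l.toFinset, (1 - (a : ℂ)⁻¹)

/-- Convert a `Nat.Partition n` to a multiset of positive integers. -/
def toPtn {n : ℕ} (p : n.Partition) : Multiset ℕ+ :=
  p.parts.pmap (fun x hx => ⟨x, hx⟩) (fun _ hx => p.parts_pos hx)

/-- The partition function `p(n)`. -/
def partcount (n : ℕ) : ℕ := Fintype.card (Nat.Partition n)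

/-- A partition lies in `P₌` iff it is nonempty with all parts equal. -/
def isPeq (l : Multiset ℕ+) : Prop :=
  ∃ (a : ℕ+) (k : ℕ), 0 < k ∧ l = Multiset.replicate k a
/-! Both sides are multiplicative over the blocks `a^m` of equal parts of `λ`, since `n_*` and
`φ` are. On a block, the sub-partitions are `a^k` for `0 ≤ k ≤ m`, with `φ(a^k) = a^k - a^(k-1)`
for `k ≥ 1`, which telescopes to `∑_{δ ≤ a^m} φ(δ) = a^m`. Hence `n_λ = ∑_{δ ≤ λ} φ(δ)`, the
sub-partitions being `Finset.Iic λ` in the order of multisets. Summing over `λ ⊢ n` and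
writing `λ = δ + μ` gives `∑_{λ ⊢ n} n_λ = ∑_{|δ| + |μ| = n} φ(δ)`, the right-hand side. -/

namespace Multiset

variable {α M : Type*} [DecidableEq α] [AddCommMonoid M] {s t : Multiset α}

theorem count_eq_zero_or_of_disjoint (hst : Disjoint s t) (a : α) :
    count a s = 0 ∨ count a t = 0 := by
  rw [← Nat.min_eq_zero_iff, ← count_inter, inter_eq_zero_iff_disjoint.2 hst, count_zero]

theorem inter_add_inter_of_disjoint (hst : Disjoint s t) {d : Multiset α} (hd : d ≤ s + t) :
    d ∩ s + d ∩ t = d := by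
  ext a
  have := le_iff_count.1 hd a
  simp only [count_add, count_inter] at this ⊢
  rcases count_eq_zero_or_of_disjoint hst a with h | h <;> omega

theorem add_inter_of_disjoint (hst : Disjoint s t) {d e : Multiset α} (hd : d ≤ s) (he : e ≤ t) :
    (d + e) ∩ s = d := by
  ext a
  have := le_iff_count.1 hd a
  have := le_iff_count.1 he a
  simp only [count_add, count_inter]
  rcases count_eq_zero_or_of_disjoint hst a with h | h <;> omega

theorem sum_Iic_add_of_disjoint (hst : Disjoint s t) (g : Multiset α → M) :
    ∑ d ∈ Finset.Iic (s + t), g d = ∑ x ∈ Finset.Iic s ×ˢ Finset.Iic t, g (x.1 + x.2) := by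
  refine Finset.sum_nbij' (fun d => (d ∩ s, d ∩ t)) (fun x => x.1 + x.2) ?_ ?_ ?_ ?_ ?_
  · intro d _
    simp [inter_le_right]
  · rintro ⟨d, e⟩ hde
    rw [Finset.mem_product, Finset.mem_Iic, Finset.mem_Iic] at hde
    exact Finset.mem_Iic.2 (add_le_add hde.1 hde.2)
  · intro d hd
    exact inter_add_inter_of_disjoint hst (Finset.mem_Iic.1 hd)
  · rintro ⟨d, e⟩ hde
    rw [Finset.mem_product, Finset.mem_Iic, Finset.mem_Iic] at hde
    rw [add_inter_of_disjoint hst hde.1 hde.2, add_comm,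
      add_inter_of_disjoint hst.symm hde.2 hde.1]
  · intro d hd
    rw [inter_add_inter_of_disjoint hst (Finset.mem_Iic.1 hd)]

theorem sum_Iic_replicate (a : α) (m : ℕ) (g : Multiset α → M) :
    ∑ d ∈ Finset.Iic (replicate m a), g d = ∑ k ∈ Finset.range (m + 1), g (replicate k a) := by
  have hIic : Finset.Iic (replicate m a) = (Finset.range (m + 1)).image (replicate · a) := by
    ext d
    simp [le_replicate_iff, eq_comm]
  rw [hIic, Finset.sum_image fun _ _ _ _ h => replicate_left_injective a h]

end Multiset

section

open Multiset

lemma nInt_add (s t : Multiset ℕ+) : nInt (s + t) = nInt s * nInt t := by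
  simp [nInt]

lemma nInt_replicate (a : ℕ+) (k : ℕ) : nInt (replicate k a) = (a : ℕ) ^ k := by
  simp [nInt]

lemma pphi_add_of_disjoint {s t : Multiset ℕ+} (h : Disjoint s t) :
    pphi (s + t) = pphi s * pphi t := by
  rw [pphi, pphi, pphi, nInt_add, toFinset_add, Finset.prod_union (disjoint_toFinset.2 h),
    Nat.cast_mul]
  ring

lemma pphi_replicate_succ (a : ℕ+) (k : ℕ) :
    pphi (replicate (k + 1) a) = (a : ℂ) ^ (k + 1) - (a : ℂ) ^ k := by
  have ha : (a : ℂ) ≠ 0 := by exact_mod_cast a.ne_zero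
  rw [pphi, nInt_replicate, toFinset_replicate, if_neg k.add_one_ne_zero, Finset.prod_singleton]
  push_cast
  field_simp
  ring

lemma sum_range_pphi_replicate (a : ℕ+) (m : ℕ) :
    ∑ k ∈ Finset.range (m + 1), pphi (replicate k a) = (a : ℂ) ^ m := by
  simp only [Finset.sum_range_succ', pphi_replicate_succ, Finset.sum_range_sub]
  simp [pphi, nInt]

lemma sum_Iic_pphi_add_of_disjoint {s t : Multiset ℕ+} (h : Disjoint s t) :
    ∑ d ∈ Finset.Iic (s + t), pphi d
      = (∑ d ∈ Finset.Iic s, pphi d) * ∑ e ∈ Finset.Iic t, pphi e := by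
  rw [sum_Iic_add_of_disjoint h, Finset.sum_mul_sum, Finset.sum_product]
  refine Finset.sum_congr rfl fun d hd => Finset.sum_congr rfl fun e he => ?_
  exact pphi_add_of_disjoint (h.mono (Finset.mem_Iic.1 hd) (Finset.mem_Iic.1 he))

theorem nInt_eq_sum_Iic_pphi (l : Multiset ℕ+) : (nInt l : ℂ) = ∑ d ∈ Finset.Iic l, pphi d := by
  induction l using strongInductionOn with
  | ih l ih =>
    rcases empty_or_exists_mem l with rfl | ⟨a, ha⟩
    · rw [show Finset.Iic (0 : Multiset ℕ+) = {0} by ext; simp]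
      simp [pphi, nInt]
    set r := l.filter (· ≠ a)
    have hl : replicate (count a l) a + r = l := by
      rw [← filter_eq', filter_add_not]
    have har : Disjoint (replicate (count a l) a) r :=
      disjoint_left.2 fun hb hbr => of_mem_filter hbr (eq_of_mem_replicate hb)
    have hrl : r < l := (filter_le _ l).lt_of_ne fun h => filter_eq_self.1 h a ha rfl
    calc (nInt l : ℂ) = (a : ℂ) ^ count a l * nInt r := by
          conv_lhs => rw [← hl]
          simp [nInt_add, nInt_replicate]
      _ = ∑ d ∈ Finset.Iic l, pphi d := by
          rw [← sum_range_pphi_replicate, ← sum_Iic_replicate, ih r hrl,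
            ← sum_Iic_pphi_add_of_disjoint har, hl]

lemma map_val_toPtn {n : ℕ} (p : n.Partition) : (toPtn p).map PNat.val = p.parts :=
  (map_pmap _ _ _ _).trans ((pmap_eq_map _ id _ _).trans (map_id _))

lemma toPtn_injective (n : ℕ) : Function.Injective (toPtn (n := n)) := fun p q h =>
  Nat.Partition.ext (by rw [← map_val_toPtn, h, map_val_toPtn])

def partitionsPNat (n : ℕ) : Finset (Multiset ℕ+) := Finset.univ.image (toPtn (n := n))

lemma mem_partitionsPNat {n : ℕ} {l : Multiset ℕ+} :
    l ∈ partitionsPNat n ↔ (l.map PNat.val).sum = n := by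
  refine ⟨?_, fun h => ?_⟩
  · rw [partitionsPNat, Finset.mem_image]
    rintro ⟨p, -, rfl⟩
    rw [map_val_toPtn, p.parts_sum]
  · let p : n.Partition := ⟨l.map PNat.val, by simp, h⟩
    exact Finset.mem_image.2
      ⟨p, Finset.mem_univ _, map_injective PNat.coe_injective (map_val_toPtn p)⟩

lemma sum_partitionsPNat {M : Type*} [AddCommMonoid M] (n : ℕ) (f : Multiset ℕ+ → M) :
    ∑ p : n.Partition, f (toPtn p) = ∑ l ∈ partitionsPNat n, f l :=
  (Finset.sum_image fun _ _ _ _ h => toPtn_injective n h).symm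

lemma card_partitionsPNat (n : ℕ) : (partitionsPNat n).card = partcount n := by
  rw [partitionsPNat, Finset.card_image_of_injective _ (toPtn_injective n), partcount,
    Finset.card_univ]

end

section

open Finset

theorem sum_partitionsPNat_sum_Iic {M : Type*} [AddCommMonoid M] (n : ℕ) (g : Multiset ℕ+ → M) :
    ∑ l ∈ partitionsPNat n, ∑ d ∈ Iic l, g d
      = ∑ k ∈ range (n + 1), #(partitionsPNat (n - k)) • ∑ d ∈ partitionsPNat k, g d := by
  rw [← Nat.sum_antidiagonal_eq_sum_range_succ fun i j =>
    #(partitionsPNat j) • ∑ d ∈ partitionsPNat i, g d]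
  calc ∑ l ∈ partitionsPNat n, ∑ d ∈ Iic l, g d
      = ∑ y ∈ (partitionsPNat n).sigma Iic, g y.2 := by rw [sum_sigma]
    _ = ∑ y ∈ (antidiagonal n).sigma fun x => partitionsPNat x.1 ×ˢ partitionsPNat x.2,
          g y.2.1 := by
      refine sum_nbij' (fun y => ⟨((y.2.map PNat.val).sum, ((y.1 - y.2).map PNat.val).sum),
          (y.2, y.1 - y.2)⟩) (fun y => ⟨y.2.1 + y.2.2, y.2.1⟩) ?_ ?_ ?_ ?_ fun _ _ => rfl
      · rintro ⟨l, d⟩ hy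
        simp only [mem_sigma, mem_product, mem_Iic, mem_partitionsPNat] at hy ⊢
        refine ⟨?_, trivial, trivial⟩
        rw [HasAntidiagonal.mem_antidiagonal, ← Multiset.sum_add, ← Multiset.map_add,
          add_tsub_cancel_of_le hy.2, hy.1]
      · rintro ⟨⟨i, j⟩, d, e⟩ hy
        simp only [mem_sigma, HasAntidiagonal.mem_antidiagonal, mem_product, mem_partitionsPNat,
          mem_Iic] at hy ⊢
        refine ⟨?_, le_add_right le_rfl⟩
        rw [Multiset.map_add, Multiset.sum_add, hy.2.1, hy.2.2, hy.1]
      · rintro ⟨l, d⟩ hy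
        simp only [mem_sigma, mem_Iic] at hy
        simp [add_tsub_cancel_of_le hy.2]
      · rintro ⟨⟨i, j⟩, d, e⟩ hy
        simp only [mem_sigma, mem_product, mem_partitionsPNat] at hy
        simp [hy.2.1, hy.2.2]
    _ = _ := by
      rw [sum_sigma]
      refine sum_congr rfl fun x _ => ?_
      rw [sum_product, smul_sum]
      simp

end

/-- `⟨n_*⟩_q = ∑_{λ∈P} φ(λ) q^{|λ|}`: in graded form, for every `n ≥ 0`,
`∑_{λ⊢n} n_λ = ∑_{k=0}^{n} (∑_{δ⊢k} φ(δ))·p(n−k)`. -/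
theorem qbracket_nInt (n : ℕ) :
    (∑ p : n.Partition, (nInt (toPtn p) : ℂ))
      = ∑ k ∈ Finset.range (n + 1),
          (∑ d : k.Partition, pphi (toPtn d)) * (partcount (n - k) : ℂ) := by
  calc ∑ p : n.Partition, (nInt (toPtn p) : ℂ)
      = ∑ l ∈ partitionsPNat n, ∑ d ∈ Finset.Iic l, pphi d := by
        rw [sum_partitionsPNat n (fun l => (nInt l : ℂ))]
        exact Finset.sum_congr rfl fun l _ => nInt_eq_sum_Iic_pphi l
    _ = _ := by
        rw [sum_partitionsPNat_sum_Iic]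
        simp only [card_partitionsPNat, sum_partitionsPNat, nsmul_eq_mul, mul_comm]
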